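/- arXiv:2003.04718 — 3 statements merged into one kernel-verified Lean document; each statement's English description precedes it below -/
import Mathlib

section
/- Let α > -1 and δ > 0. The function U_δ(x) = log( 8(1+α)² δ^{2(1+α)} / (δ^{2(1+α)} + |x|^{2(1+α)})² ) defined on ℝ² satisfies -ΔU_δ(x) = |x|^{2α} e^{U_δ(x)} for all x ≠ 0. -/
/-! With `β = 1 + α`, `A = δ ^ (2β)` and `s = |x|²`, the function is radial:
`U x = g (|x|²)` with `g s = log (8β²A) - 2 log (A + s ^ β)`. Since `|x + t eᵢ|² = s + 2 xᵢ t + t²`,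
the planar Laplacian of such a function is `4 s g'' + 4 g' = 4 (s g')'`, and differentiating
`s g' s = -2β s^β / (A + s^β)` gives `ΔU = -8β²A s^(β-1) / (A + s^β)² = -|x|^(2α) e^U`. -/

open MeasureTheory Real

/-- The Laplacian of a function on `ℝ²`, as the sum of second directional
derivatives along the standard coordinate directions. -/
noncomputable def laplacian (f : EuclideanSpace ℝ (Fin 2) → ℝ)
    (x : EuclideanSpace ℝ (Fin 2)) : ℝ :=
  ∑ i : Fin 2, iteratedDeriv 2 (fun t : ℝ => f (x + t • EuclideanSpace.single i (1 : ℝ))) 0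

open Filter Topology

theorem iteratedDeriv_two_comp_quadratic {g g' : ℝ → ℝ} {g'' s : ℝ} (b : ℝ)
    (hg : ∀ᶠ u in 𝓝 s, HasDerivAt g (g' u) u) (hg' : HasDerivAt g' g'' s) :
    iteratedDeriv 2 (fun t => g (s + b * t + t ^ 2)) 0 = g'' * b ^ 2 + 2 * g' s := by
  set q : ℝ → ℝ := fun t => s + b * t + t ^ 2
  have hq : ∀ t, HasDerivAt q (b + 2 * t) t := fun t => by
    simpa using (((hasDerivAt_id t).const_mul b).const_add s).fun_add (hasDerivAt_pow 2 t)
  have hq0 : q 0 = s := by simp [q]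
  have hq_tendsto : Tendsto q (𝓝 0) (𝓝 s) := hq0 ▸ (hq 0).continuousAt.tendsto
  have hderiv : deriv (fun t => g (q t)) =ᶠ[𝓝 0] fun t => g' (q t) * (b + 2 * t) := by
    filter_upwards [hq_tendsto.eventually hg] with t ht using (ht.comp t (hq t)).deriv
  have hderiv' : HasDerivAt (fun t => g' (q t) * (b + 2 * t)) (g'' * b * b + g' s * 2) 0 := by
    simpa [hq0] using (hg'.comp_of_eq 0 (hq 0) hq0.symm).fun_mul
      (((hasDerivAt_id (0 : ℝ)).const_mul 2).const_add b)
  rw [iteratedDeriv_succ, iteratedDeriv_one, hderiv.deriv_eq, hderiv'.deriv]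
  ring

theorem EuclideanSpace.norm_add_smul_single_sq {ι : Type*} [Fintype ι] [DecidableEq ι]
    (x : EuclideanSpace ℝ ι) (i : ι) (t : ℝ) :
    ‖x + t • EuclideanSpace.single i (1 : ℝ)‖ ^ 2 = ‖x‖ ^ 2 + 2 * x i * t + t ^ 2 := by
  rw [norm_add_sq_real, real_inner_smul_right, EuclideanSpace.inner_single_right, norm_smul]
  simp
  ring

theorem laplacian_comp_norm_sq {g g' : ℝ → ℝ} {g'' : ℝ} {x : EuclideanSpace ℝ (Fin 2)}
    (hg : ∀ᶠ u in 𝓝 (‖x‖ ^ 2), HasDerivAt g (g' u) u) (hg' : HasDerivAt g' g'' (‖x‖ ^ 2)) :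
    laplacian (fun y => g (‖y‖ ^ 2)) x = 4 * ‖x‖ ^ 2 * g'' + 4 * g' (‖x‖ ^ 2) := by
  have hline : ∀ i, iteratedDeriv 2 (fun t : ℝ => g (‖x + t • EuclideanSpace.single i 1‖ ^ 2)) 0
      = g'' * (2 * x i) ^ 2 + 2 * g' (‖x‖ ^ 2) := fun i => by
    simp_rw [EuclideanSpace.norm_add_smul_single_sq]
    exact iteratedDeriv_two_comp_quadratic _ hg hg'
  simp only [laplacian, hline, Fin.sum_univ_two]
  rw [EuclideanSpace.real_norm_sq_eq, Fin.sum_univ_two]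
  ring

section LogBubble

variable {A β u : ℝ}

theorem hasDerivAt_log_add_rpow (hA : 0 ≤ A) (hu : 0 < u) :
    HasDerivAt (fun u => log (A + u ^ β)) (β * u ^ (β - 1) / (A + u ^ β)) u :=
  ((hasDerivAt_rpow_const (Or.inl hu.ne')).const_add A).log (by positivity)

theorem hasDerivAt_rpow_sub_one_div_add_rpow (hA : 0 ≤ A) (hu : 0 < u) :
    HasDerivAt (fun u => β * u ^ (β - 1) / (A + u ^ β))
      ((β * ((β - 1) * u ^ (β - 2)) * (A + u ^ β) - β * u ^ (β - 1) * (β * u ^ (β - 1)))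
        / (A + u ^ β) ^ 2) u := by
  have hnum := (hasDerivAt_rpow_const (p := β - 1) (Or.inl hu.ne')).const_mul β
  rw [show β - 1 - 1 = β - 2 by ring] at hnum
  exact hnum.div ((hasDerivAt_rpow_const (Or.inl hu.ne')).const_add A) (by positivity)

theorem laplacian_log_bubble (K : ℝ) (hA : 0 ≤ A) {x : EuclideanSpace ℝ (Fin 2)} (hx : x ≠ 0) :
    laplacian (fun y => log K - 2 * log (A + (‖y‖ ^ 2) ^ β)) x
      = -(8 * β ^ 2 * A * (‖x‖ ^ 2) ^ (β - 1) / (A + (‖x‖ ^ 2) ^ β) ^ 2) := by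
  set s := ‖x‖ ^ 2
  have hs : 0 < s := by positivity
  have hg : ∀ᶠ u in 𝓝 s, HasDerivAt (fun u => log K - 2 * log (A + u ^ β))
      (-(2 * (β * u ^ (β - 1) / (A + u ^ β)))) u := by
    filter_upwards [Ioi_mem_nhds hs] with u hu
    exact ((hasDerivAt_log_add_rpow hA hu).const_mul 2).const_sub _
  rw [laplacian_comp_norm_sq hg ((hasDerivAt_rpow_sub_one_div_add_rpow hA hs).const_mul 2).neg,
    rpow_sub hs, rpow_sub_one hs.ne', rpow_two]
  field_simp
  ring

end LogBubble

theorem stmt0 (α δ : ℝ) (hα : α > -1) (hδ : δ > 0)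
    (U : EuclideanSpace ℝ (Fin 2) → ℝ)
    (hU : ∀ x, U x =
      Real.log (8 * (1 + α) ^ 2 * δ ^ (2 * (1 + α)) /
        (δ ^ (2 * (1 + α)) + ‖x‖ ^ (2 * (1 + α))) ^ 2)) :
    ∀ x : EuclideanSpace ℝ (Fin 2), x ≠ 0 →
      -laplacian U x = ‖x‖ ^ (2 * α) * Real.exp (U x) := by
  intro x hx
  set β := 1 + α
  set A := δ ^ (2 * β)
  have hA : 0 < A := rpow_pos_of_pos hδ _
  have hK : 0 < 8 * β ^ 2 * A := by
    have hβ : β ≠ 0 := by linarith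
    positivity
  have hnorm : ∀ (y : EuclideanSpace ℝ (Fin 2)) (p : ℝ), ‖y‖ ^ (2 * p) = (‖y‖ ^ 2) ^ p := by
    intro y p
    simpa using rpow_natCast_mul (norm_nonneg y) 2 p
  have hpow : ‖x‖ ^ (2 * α) = (‖x‖ ^ 2) ^ (β - 1) := by
    rw [← hnorm]
    congr 1
    ring
  have hexp : exp (U x) = 8 * β ^ 2 * A / (A + (‖x‖ ^ 2) ^ β) ^ 2 := by
    rw [hU, hnorm, exp_log (by positivity)]
  have hU_radial : U = fun y => log (8 * β ^ 2 * A) - 2 * log (A + (‖y‖ ^ 2) ^ β) := by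
    funext y
    rw [hU, hnorm, log_div hK.ne' (by positivity), log_pow]
    push_cast
    ring
  rw [hpow, hexp, hU_radial, laplacian_log_bubble _ hA.le hx]
  ring
end

section
/- Let α ∈ (-1, ∞), and for j = 1 define f_1 = (1/2) U_1², where U_1(z) = log( 8(1+α)² / (1+|z|^{2(1+α)})² ). Then the constant C_1 = 8(1+α)² ∫_0^∞ t^{1+2α} ((t^{2(1+α)} - 1)/(t^{2(1+α)} + 1)³) f_1(t) dt equals 12(1+α) − 4(1+α) log(8(1+α)²). -/
open MeasureTheory Real Set Filter Topology

/-!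
With `b = 1 + α` and `L = log (8 b²)`, the substitution `s = t ^ (2b)` turns the integral into
`2b ∫₀^∞ (s - 1)/(s + 1)³ (L - 2 log (1 + s))² ds`. In `w = 1 + s` this integrand is
`(w - 2)/w³ (L - 2 log w)²`, which has an explicit primitive of the form
`P(log w)/w + Q(log w)/w²` with quadratic `P, Q`; it vanishes at infinity and equals `2L - 6`
at `w = 1`, so the integral is `2b (6 - 2L)`.
-/

noncomputable def logSqPrimitive (L w : ℝ) : ℝ :=
  (4 * L - 8 - L ^ 2 + (4 * L - 8) * log w - 4 * log w ^ 2) / w +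
    (L ^ 2 - 2 * L + 2 + (4 - 4 * L) * log w + 4 * log w ^ 2) / w ^ 2

lemma hasDerivAt_logSqPrimitive (L : ℝ) {w : ℝ} (hw : 0 < w) :
    HasDerivAt (logSqPrimitive L) ((w - 2) / w ^ 3 * (L - 2 * log w) ^ 2) w := by
  have hw0 : w ≠ 0 := hw.ne'
  have hlog : HasDerivAt log w⁻¹ w := hasDerivAt_log hw0
  have hlog_sq : HasDerivAt (fun x => log x ^ 2) (2 * log w ^ 1 * w⁻¹) w := by
    exact_mod_cast hlog.fun_pow 2
  have hP := (((hlog.const_mul (4 * L - 8)).const_add (4 * L - 8 - L ^ 2)).sub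
    (hlog_sq.const_mul 4)).div (hasDerivAt_id w) hw0
  have hQ := (((hlog.const_mul (4 - 4 * L)).const_add (L ^ 2 - 2 * L + 2)).add
    (hlog_sq.const_mul 4)).div (hasDerivAt_pow 2 w) (pow_ne_zero 2 hw0)
  refine (hP.add hQ).congr_deriv ?_
  simp only [id, Pi.add_apply, Pi.sub_apply]
  field_simp
  ring

lemma tendsto_quadratic_log_div_atTop (c₀ c₁ c₂ : ℝ) :
    Tendsto (fun w => (c₀ + c₁ * log w + c₂ * log w ^ 2) / w) atTop (𝓝 0) := by
  have h : ∀ n : ℕ, Tendsto (fun w => log w ^ n / w) atTop (𝓝 0) := fun n => by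
    simpa using tendsto_pow_log_div_mul_add_atTop 1 0 n one_ne_zero
  have := ((h 0).const_mul c₀).add (((h 1).const_mul c₁).add ((h 2).const_mul c₂))
  simp only [pow_zero, pow_one, mul_zero, add_zero] at this
  exact this.congr fun w => by ring

lemma tendsto_logSqPrimitive_atTop (L : ℝ) : Tendsto (logSqPrimitive L) atTop (𝓝 0) := by
  have h₁ := tendsto_quadratic_log_div_atTop (4 * L - 8 - L ^ 2) (4 * L - 8) (-4)
  have h₂ := (tendsto_quadratic_log_div_atTop (L ^ 2 - 2 * L + 2) (4 - 4 * L) 4).mul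
    tendsto_inv_atTop_zero
  rw [mul_zero] at h₂
  simpa only [add_zero] using (h₁.add h₂).congr fun w => by
    simp only [logSqPrimitive, div_eq_mul_inv, pow_two w, mul_inv]
    ring

lemma logSqPrimitive_one (L : ℝ) : logSqPrimitive L 1 = 2 * L - 6 := by
  simp only [logSqPrimitive, log_one]
  ring

noncomputable def logSqKernel (L y : ℝ) : ℝ :=
  (y - 1) / (y + 1) ^ 3 * (L - 2 * log (1 + y)) ^ 2

lemma hasDerivAt_logSqPrimitive_one_add (L : ℝ) {y : ℝ} (hy : -1 < y) :
    HasDerivAt (fun y => logSqPrimitive L (1 + y)) (logSqKernel L y) y := by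
  refine ((hasDerivAt_logSqPrimitive L (by linarith : 0 < 1 + y)).comp_const_add 1 y).congr_deriv
    ?_
  simp only [logSqKernel]
  ring_nf

lemma continuousOn_logSqKernel (L : ℝ) : ContinuousOn (logSqKernel L) (Ici 0) := by
  intro y hy
  have hy : (0 : ℝ) ≤ y := hy
  unfold logSqKernel
  exact ContinuousAt.continuousWithinAt (by fun_prop (disch := positivity))

lemma integrableOn_logSqKernel (L : ℝ) : IntegrableOn (logSqKernel L) (Ioi 0) := by
  rw [← Ioc_union_Ioi_eq_Ioi zero_le_one]
  refine IntegrableOn.union ?_ ?_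
  · exact ((continuousOn_logSqKernel L).mono Icc_subset_Ici_self).integrableOn_Icc.mono_set
      Ioc_subset_Icc_self
  · refine integrableOn_Ioi_deriv_of_nonneg
      (hasDerivAt_logSqPrimitive_one_add L (by norm_num)).continuousAt.continuousWithinAt
      (fun y hy => hasDerivAt_logSqPrimitive_one_add L (by linarith [mem_Ioi.mp hy]))
      (fun y hy => ?_)
      ((tendsto_logSqPrimitive_atTop L).comp (tendsto_atTop_add_const_left _ 1 tendsto_id))
    have hy : (1 : ℝ) < y := hy
    unfold logSqKernel
    exact mul_nonneg (div_nonneg (by linarith) (by positivity)) (sq_nonneg _)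

lemma integral_logSqKernel (L : ℝ) : ∫ y in Ioi 0, logSqKernel L y = 6 - 2 * L := by
  rw [integral_Ioi_of_hasDerivAt_of_tendsto
    (hasDerivAt_logSqPrimitive_one_add L (by norm_num)).continuousAt.continuousWithinAt
    (fun y hy => hasDerivAt_logSqPrimitive_one_add L (by linarith [mem_Ioi.mp hy]))
    (integrableOn_logSqKernel L)
    ((tendsto_logSqPrimitive_atTop L).comp (tendsto_atTop_add_const_left _ 1 tendsto_id))]
  rw [add_zero, logSqPrimitive_one]
  ring

theorem stmt13 (α : ℝ) (hα : α > -1) :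
    IntegrableOn (fun t : ℝ =>
      8 * (1 + α) ^ 2 * t ^ (1 + 2 * α) *
        ((t ^ (2 * (1 + α)) - 1) / (t ^ (2 * (1 + α)) + 1) ^ 3) *
        ((1 / 2) * (Real.log (8 * (1 + α) ^ 2 / (1 + t ^ (2 * (1 + α))) ^ 2)) ^ 2))
      (Set.Ioi 0) ∧
    ∫ t in Set.Ioi (0 : ℝ),
        8 * (1 + α) ^ 2 * t ^ (1 + 2 * α) *
          ((t ^ (2 * (1 + α)) - 1) / (t ^ (2 * (1 + α)) + 1) ^ 3) *
          ((1 / 2) * (Real.log (8 * (1 + α) ^ 2 / (1 + t ^ (2 * (1 + α))) ^ 2)) ^ 2)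
      = 12 * (1 + α) - 4 * (1 + α) * Real.log (8 * (1 + α) ^ 2) := by
  have hb : 0 < 1 + α := by linarith
  have hp : 0 < 2 * (1 + α) := by positivity
  set L := log (8 * (1 + α) ^ 2)
  have hsubst : EqOn (fun t : ℝ =>
      8 * (1 + α) ^ 2 * t ^ (1 + 2 * α) *
        ((t ^ (2 * (1 + α)) - 1) / (t ^ (2 * (1 + α)) + 1) ^ 3) *
        ((1 / 2) * (log (8 * (1 + α) ^ 2 / (1 + t ^ (2 * (1 + α))) ^ 2)) ^ 2))
      (fun t => 2 * (1 + α) *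
        ((|2 * (1 + α)| * t ^ (2 * (1 + α) - 1)) • logSqKernel L (t ^ (2 * (1 + α))))) (Ioi 0) := by
    intro t ht
    have hs : 0 < t ^ (2 * (1 + α)) := rpow_pos_of_pos ht _
    have hexp : (1 : ℝ) + 2 * α = 2 * (1 + α) - 1 := by ring
    dsimp only
    rw [log_div (by positivity) (by positivity), log_pow, abs_of_pos hp, hexp, smul_eq_mul]
    simp only [logSqKernel]
    push_cast
    ring
  have hint : IntegrableOn (fun t => 2 * (1 + α) *
      ((|2 * (1 + α)| * t ^ (2 * (1 + α) - 1)) • logSqKernel L (t ^ (2 * (1 + α))))) (Ioi 0) :=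
    ((integrableOn_Ioi_comp_rpow_iff _ hp.ne').mpr (integrableOn_logSqKernel L)).const_mul
      (2 * (1 + α))
  refine ⟨hint.congr_fun hsubst.symm measurableSet_Ioi, ?_⟩
  rw [setIntegral_congr_fun measurableSet_Ioi hsubst, integral_const_mul,
    integral_comp_rpow_Ioi _ hp.ne', integral_logSqKernel]
  ring
end

section
/- With V_{1,0}(z) = log(8/(1+|z|²)²) and f̃_1 = (1/2) V_{1,0}², the constant C̃_1 = 8 ∫_0^∞ t ((t²-1)/(t²+1)³) f̃_1(t) dt equals 12 − 4 log 8. -/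
/-!
With `u = 1 + t²` and `V = log (8 / u²)`, the integrand is `4 t (u - 2) V² / u³`, and
`u ↦ 2 (u - 2) V² / u³` has the explicit primitive
`-2 ((V - 2)² + 4) / u + 2 ((V - 1)² + 1) / u²`, which tends to `0` as `u → ∞` because
`(log u)² = o(u)`. The integral is therefore minus its value at `u = 1`, where `V = log 8`,
namely `12 - 4 log 8`. Integrability comes from continuity on `[0, 1]` and the sign of the
integrand on `[1, ∞)`.
-/

open MeasureTheory Real Filter Set Topology Asymptotics

theorem tendsto_affine_log_pow_div_atTop (a b : ℝ) (n : ℕ) :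
    Tendsto (fun u => (a + b * log u) ^ n / u) atTop (𝓝 0) := by
  have hlin : (fun u => a + b * log u) =O[atTop] log :=
    isLittleO_const_log_atTop.isBigO.add ((isBigO_refl _ _).const_mul_left b)
  exact ((hlin.pow n).trans_isLittleO isLittleO_pow_log_id_atTop).tendsto_div_nhds_zero

theorem integrableOn_Ioi_and_integral_Ioi_eq_of_hasDerivAt {f F : ℝ → ℝ} {a b l : ℝ}
    (hab : a ≤ b) (hderiv : ∀ x ∈ Ici a, HasDerivAt F (f x) x)
    (hcont : ContinuousOn f (Icc a b))
    (hnonneg : ∀ x ∈ Ioi b, 0 ≤ f x) (hlim : Tendsto F atTop (𝓝 l)) :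
    IntegrableOn f (Ioi a) ∧ ∫ x in Ioi a, f x = l - F a := by
  have hint : IntegrableOn f (Ioi a) := by
    rw [← Ioc_union_Ioi_eq_Ioi hab]
    refine (hcont.integrableOn_Icc.mono_set Ioc_subset_Icc_self).union ?_
    exact integrableOn_Ioi_deriv_of_nonneg (hderiv b hab).continuousAt.continuousWithinAt
      (fun x hx => hderiv x (hab.trans hx.le)) hnonneg hlim
  refine ⟨hint, integral_Ioi_of_hasDerivAt_of_tendsto ?_ (fun x hx => hderiv x (mem_Ioi.1 hx).le)
    hint hlim⟩
  exact (hderiv a self_mem_Ici).continuousAt.continuousWithinAt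

/-- `bubble (1 + |z|²) = V_{1,0}(z)`. -/
noncomputable def bubble (u : ℝ) : ℝ := log 8 - 2 * log u

noncomputable def bubblePrimitive (u : ℝ) : ℝ :=
  -2 * ((bubble u - 2) ^ 2 + 4) / u + 2 * ((bubble u - 1) ^ 2 + 1) / u ^ 2

theorem hasDerivAt_bubble {u : ℝ} (hu : 0 < u) : HasDerivAt bubble (-2 / u) u := by
  rw [neg_div, div_eq_mul_inv]
  exact ((hasDerivAt_log hu.ne').const_mul 2).const_sub (log 8)

theorem hasDerivAt_bubblePrimitive {u : ℝ} (hu : 0 < u) :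
    HasDerivAt bubblePrimitive (2 * (u - 2) * bubble u ^ 2 / u ^ 3) u := by
  have hV := hasDerivAt_bubble hu
  have h1 : HasDerivAt (fun v => -2 * ((bubble v - 2) ^ 2 + 4) / v) _ u :=
    ((((hV.sub_const 2).pow 2).add_const 4).const_mul (-2)).div (hasDerivAt_id u) hu.ne'
  have h2 : HasDerivAt (fun v => 2 * ((bubble v - 1) ^ 2 + 1) / v ^ 2) _ u :=
    ((((hV.sub_const 1).pow 2).add_const 1).const_mul 2).div ((hasDerivAt_id u).pow 2)
      (pow_ne_zero 2 hu.ne')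
  refine (h1.add h2 : HasDerivAt bubblePrimitive _ u).congr_deriv ?_
  simp only [Pi.pow_apply, id]
  field_simp
  ring

theorem tendsto_bubblePrimitive_atTop : Tendsto bubblePrimitive atTop (𝓝 0) := by
  have hsq (c : ℝ) : Tendsto (fun u => (bubble u - c) ^ 2 / u) atTop (𝓝 0) := by
    simpa [bubble, sub_eq_add_neg, add_right_comm] using
      tendsto_affine_log_pow_div_atTop (log 8 - c) (-2) 2
  have hinv : Tendsto (fun u : ℝ => u⁻¹) atTop (𝓝 0) := tendsto_inv_atTop_zero
  have hlim := (((hsq 2).add (hinv.const_mul 4)).const_mul (-2)).add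
    ((((hsq 1).add hinv).mul hinv).const_mul 2)
  simp only [mul_zero, add_zero] at hlim
  refine hlim.congr' ?_
  filter_upwards [eventually_gt_atTop 0] with u hu
  simp only [bubblePrimitive]
  field_simp

noncomputable def integrand (t : ℝ) : ℝ :=
  8 * (t * ((t ^ 2 - 1) / (t ^ 2 + 1) ^ 3) * ((1 / 2) * (log (8 / (1 + t ^ 2) ^ 2)) ^ 2))

theorem continuous_integrand : Continuous integrand := by
  unfold integrand
  fun_prop (disch := intros; positivity)

theorem integrand_nonneg {t : ℝ} (ht : 1 ≤ t) : 0 ≤ integrand t := by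
  have : 0 ≤ t ^ 2 - 1 := by nlinarith
  unfold integrand
  positivity

theorem bubble_eq_log {u : ℝ} (hu : 0 < u) : bubble u = log (8 / u ^ 2) := by
  rw [bubble, log_div (by norm_num) (by positivity), log_pow, Nat.cast_ofNat]

theorem hasDerivAt_bubblePrimitive_one_add_sq (t : ℝ) :
    HasDerivAt (fun t => bubblePrimitive (1 + t ^ 2)) (integrand t) t := by
  have hu : 0 < 1 + t ^ 2 := by positivity
  have h := (hasDerivAt_bubblePrimitive hu).comp t ((hasDerivAt_pow 2 t).const_add 1)
  refine h.congr_deriv ?_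
  rw [integrand, ← bubble_eq_log hu]
  field_simp
  ring

theorem stmt14 :
    IntegrableOn (fun t : ℝ =>
      8 * (t * ((t ^ 2 - 1) / (t ^ 2 + 1) ^ 3) *
        ((1 / 2) * (Real.log (8 / (1 + t ^ 2) ^ 2)) ^ 2)))
      (Set.Ioi 0) ∧
    ∫ t in Set.Ioi (0 : ℝ),
        8 * (t * ((t ^ 2 - 1) / (t ^ 2 + 1) ^ 3) *
          ((1 / 2) * (Real.log (8 / (1 + t ^ 2) ^ 2)) ^ 2))
      = 12 - 4 * Real.log 8 := by
  have hlim : Tendsto (fun t : ℝ => bubblePrimitive (1 + t ^ 2)) atTop (𝓝 0) :=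
    tendsto_bubblePrimitive_atTop.comp
      (tendsto_atTop_add_const_left _ 1 (tendsto_pow_atTop two_ne_zero))
  obtain ⟨hint, hval⟩ := integrableOn_Ioi_and_integral_Ioi_eq_of_hasDerivAt zero_le_one
    (fun t _ => hasDerivAt_bubblePrimitive_one_add_sq t) continuous_integrand.continuousOn
    (fun t ht => integrand_nonneg (mem_Ioi.1 ht).le) hlim
  refine ⟨hint, hval.trans ?_⟩
  norm_num [bubblePrimitive, bubble]
  ring
end
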